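/- arXiv:1406.4337 — 5 statements merged into one kernel-verified Lean document; each statement's English description precedes it below -/
import Mathlib

section
/- Let X and Y be Banach spaces, F : X ⇝ Y a set-valued map with nonempty values and closed graph, p ∈ X, (x,y) ∈ gr F, and let G ⊆ Y be a compact set with G ⊆ ∂^L F(x,y)/∂p. Then lim_{δ→0+} (1/δ) h*(y + δG, F(x+δp)) = 0, where y + δG = {y + δg : g ∈ G}. -/
open Filter Metric Set Topology Pointwise

/-- Upper contingent cone `T^U_K(x)`. -/
noncomputable def upperContingentCone {X : Type*} [NormedAddCommGroup X] [NormedSpace ℝ X]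
    (K : Set X) (x : X) : Set X :=
  {u : X | liminf (fun δ : ℝ => (1 / δ) * infDist (x + δ • u) K) (𝓝[>] 0) = 0}

/-- Lower contingent cone `T^L_K(x)`. -/
noncomputable def lowerContingentCone {X : Type*} [NormedAddCommGroup X] [NormedSpace ℝ X]
    (K : Set X) (x : X) : Set X :=
  {u : X | Tendsto (fun δ : ℝ => (1 / δ) * infDist (x + δ • u) K) (𝓝[>] 0) (𝓝 0)}

/-- Graph of a set-valued map. -/
def svGraph {X Y : Type*} (F : X → Set Y) : Set (X × Y) := {q : X × Y | q.2 ∈ F q.1}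

/-- Upper derivative set `∂^U F(x,y)/∂p`. -/
noncomputable def upperDerivSet {X Y : Type*} [NormedAddCommGroup X] [NormedSpace ℝ X]
    [NormedAddCommGroup Y] [NormedSpace ℝ Y] (F : X → Set Y) (x : X) (y : Y) (p : X) : Set Y :=
  {u : Y | liminf (fun δ : ℝ => (1 / δ) * infDist (y + δ • u) (F (x + δ • p))) (𝓝[>] 0) = 0}

/-- Lower derivative set `∂^L F(x,y)/∂p`. -/
noncomputable def lowerDerivSet {X Y : Type*} [NormedAddCommGroup X] [NormedSpace ℝ X]
    [NormedAddCommGroup Y] [NormedSpace ℝ Y] (F : X → Set Y) (x : X) (y : Y) (p : X) : Set Y :=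
  {u : Y | Tendsto (fun δ : ℝ => (1 / δ) * infDist (y + δ • u) (F (x + δ • p))) (𝓝[>] 0) (𝓝 0)}

/-- Local Lipschitz continuity of a set-valued map (w.r.t. Hausdorff distance). -/
def LocallyLipschitzSV {X Y : Type*} [NormedAddCommGroup X] [NormedAddCommGroup Y]
    (F : X → Set Y) : Prop :=
  ∀ x : X, ∃ L : ℝ, 0 ≤ L ∧ ∃ r : ℝ, 0 < r ∧
    ∀ y ∈ ball x r, ∀ z ∈ ball x r, hausdorffDist (F y) (F z) ≤ L * dist y z

/-- Hausdorff deviation `h*(E, D) = sup_{e ∈ E} d(e, D)`. -/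
noncomputable def hausdorffDev {Y : Type*} [NormedAddCommGroup Y] (E D : Set Y) : ℝ :=
  sSup ((fun e => infDist e D) '' E)

theorem tendsto_hausdorffDev_of_compact_subset_lowerDerivSet
    {X Y : Type*} [NormedAddCommGroup X] [NormedSpace ℝ X] [CompleteSpace X]
    [NormedAddCommGroup Y] [NormedSpace ℝ Y] [CompleteSpace Y]
    (F : X → Set Y) (hne : ∀ x : X, (F x).Nonempty) (hF : IsClosed (svGraph F))
    (p : X) (x : X) (y : Y) (hxy : (x, y) ∈ svGraph F)
    (G : Set Y) (hG : IsCompact G) (hGsub : G ⊆ lowerDerivSet F x y p) :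
    Tendsto
      (fun δ : ℝ => (1 / δ) * hausdorffDev ((fun g => y + δ • g) '' G) (F (x + δ • p)))
      (𝓝[>] 0) (𝓝 0) := by
  rw [NormedAddCommGroup.tendsto_nhds_zero]
  intro ε hε
  have hcov : G ⊆ ⋃ g : G, ball (g : Y) (ε / 4) := by
    intro g hg
    exact mem_iUnion.2 ⟨⟨g, hg⟩, mem_ball_self (by linarith)⟩
  obtain ⟨t, ht⟩ := hG.elim_finite_subcover (fun g : G => ball (g : Y) (ε / 4))
    (fun _ => isOpen_ball) hcov
  have hev : ∀ᶠ δ in 𝓝[>] (0 : ℝ), ∀ i ∈ t,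
      (1 / δ) * infDist (y + δ • (i : Y)) (F (x + δ • p)) < ε / 4 := by
    rw [eventually_all_finset]
    intro i _
    exact (hGsub i.2).eventually_lt_const (by linarith)
  filter_upwards [hev, self_mem_nhdsWithin] with δ hδ1 hδpos
  have hδ : (0 : ℝ) < δ := hδpos
  set K := F (x + δ • p)
  set S := (fun e => infDist e K) '' ((fun g => y + δ • g) '' G) with hSdef
  have hub : ∀ s ∈ S, s ≤ δ * (ε / 2) := by
    rintro s ⟨e, ⟨g, hg, rfl⟩, rfl⟩
    obtain ⟨i, hit, hgi⟩ := mem_iUnion₂.1 (ht hg)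
    have h1 : infDist (y + δ • g) K ≤ infDist (y + δ • (i : Y)) K
        + dist (y + δ • g) (y + δ • (i : Y)) := infDist_le_infDist_add_dist
    have h2 : dist (y + δ • g) (y + δ • (i : Y)) = δ * dist g (i : Y) := by
      rw [dist_add_left, dist_smul₀, Real.norm_of_nonneg hδ.le]
    have h3 : infDist (y + δ • (i : Y)) K < δ * (ε / 4) := by
      have := hδ1 i hit
      rw [div_mul_eq_mul_div, one_mul, div_lt_iff₀ hδ] at this
      linarith [this]
    have h4 : dist g (i : Y) < ε / 4 := mem_ball.1 hgi
    nlinarith [dist_nonneg (x := g) (y := (i : Y))]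
  have hnonneg : 0 ≤ sSup S :=
    Real.sSup_nonneg (by rintro s ⟨e, _, rfl⟩; exact infDist_nonneg)
  have hle : sSup S ≤ δ * (ε / 2) :=
    Real.sSup_le hub (by positivity)
  have : (1 / δ) * sSup S ≤ ε / 2 := by
    rw [div_mul_eq_mul_div, one_mul, div_le_iff₀ hδ]
    linarith [hle]
  have hfn : (1 / δ) * hausdorffDev ((fun g => y + δ • g) '' G) K = (1 / δ) * sSup S := rfl
  rw [hfn, Real.norm_of_nonneg (by positivity)]
  linarith
end

section
/- Let X and Y be Banach spaces, F : X ⇝ Y a set-valued map with nonempty values and closed graph, p ∈ X, (x,y) ∈ gr F, and let G ⊆ Y be a compact set with G ⊆ ∂^L F(x,y)/∂p. Then there exist δ* > 0 and a function r : [0, δ*] → [0, ∞) with r(δ) → 0 as δ → 0+ such that y + δG ⊆ F(x+δp) + δ r(δ) B for every δ ∈ [0, δ*], where B = {v ∈ Y : ‖v‖ ≤ 1} is the closed unit ball of Y. -/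
open Filter Metric Set Topology Pointwise

/-! For `δ > 0` the functions `g ↦ δ⁻¹ d(y + δg, F(x + δp))` are `1`-Lipschitz in `g` and tend
to `0` pointwise on `G`; equi-Lipschitz convergence is uniform on the compact set `G`. Hence the
deviation `S δ = sup_{g ∈ G} d(y + δg, F(x + δp))` is `o(δ)`, and `r δ = S δ / δ + δ` works: the
extra `δ` makes `δ r δ` strictly exceed every distance `d(y + δg, F(x + δp))`, so that a point of
`F(x + δp)` within that distance exists. -/

section HausdorffDev

variable {Y : Type*} [NormedAddCommGroup Y]

lemma hausdorffDev_nonneg (E D : Set Y) : 0 ≤ hausdorffDev E D :=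
  Real.sSup_nonneg <| by rintro _ ⟨e, -, rfl⟩; exact infDist_nonneg

lemma infDist_le_hausdorffDev {E : Set Y} (hE : Bornology.IsBounded E) (D : Set Y) {e : Y}
    (he : e ∈ E) : infDist e D ≤ hausdorffDev E D :=
  le_csSup ((lipschitz_infDist_pt D).isBounded_image hE).bddAbove ⟨e, he, rfl⟩

lemma hausdorffDev_le {E D : Set Y} {c : ℝ} (hc : 0 ≤ c) (h : ∀ e ∈ E, infDist e D ≤ c) :
    hausdorffDev E D ≤ c :=
  Real.sSup_le (by rintro _ ⟨e, he, rfl⟩; exact h e he) hc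

lemma subset_add_smul_closedBall_of_hausdorffDev_lt [NormedSpace ℝ Y] {E D : Set Y} {c : ℝ}
    (hE : Bornology.IsBounded E) (hD : D.Nonempty) (h : hausdorffDev E D < c) :
    E ⊆ D + c • closedBall (0 : Y) 1 := by
  intro e he
  have hthick : e ∈ thickening c D :=
    (mem_thickening_iff_infDist_lt hD).2 ((infDist_le_hausdorffDev hE D he).trans_lt h)
  rw [← add_ball_zero, smul_unitClosedBall_of_nonneg ((hausdorffDev_nonneg E D).trans h.le)]
    at *
  exact add_subset_add_left ball_subset_closedBall hthick

end HausdorffDev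

lemma IsCompact.eventually_forall_le_of_tendsto {ι Y : Type*} [PseudoMetricSpace Y]
    {l : Filter ι} {φ : ι → Y → ℝ} {K : Set Y} (hK : IsCompact K)
    (hLip : ∀ᶠ i in l, ∀ a b, φ i a ≤ φ i b + dist a b)
    (hφ : ∀ a ∈ K, Tendsto (φ · a) l (𝓝 0)) {ε : ℝ} (hε : 0 < ε) :
    ∀ᶠ i in l, ∀ a ∈ K, φ i a ≤ ε := by
  obtain ⟨t, htK, hcover⟩ :=
    hK.elim_nhds_subcover (fun b => ball b (ε / 2)) fun b _ => ball_mem_nhds b (half_pos hε)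
  have hcenters : ∀ᶠ i in l, ∀ b ∈ t, φ i b < ε / 2 :=
    t.eventually_all.2 fun b hb => (hφ b (htK b hb)).eventually (eventually_lt_nhds (half_pos hε))
  filter_upwards [hLip, hcenters] with i hi hit a ha
  obtain ⟨b, hbt, hab⟩ := mem_iUnion₂.1 (hcover ha)
  linarith [hi a b, hit b hbt, mem_ball.1 hab]

section DerivSet

variable {X Y : Type*} [NormedAddCommGroup X] [NormedSpace ℝ X]
  [NormedAddCommGroup Y] [NormedSpace ℝ Y]

lemma one_div_mul_infDist_add_smul_le {y : Y} {D : Set Y} {δ : ℝ} (hδ : 0 < δ) (a b : Y) :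
    1 / δ * infDist (y + δ • a) D ≤ 1 / δ * infDist (y + δ • b) D + dist a b := by
  have h : infDist (y + δ • a) D ≤ infDist (y + δ • b) D + δ * dist a b := by
    simpa [dist_smul₀, abs_of_pos hδ] using
      infDist_le_infDist_add_dist (x := y + δ • a) (y := y + δ • b) (s := D)
  calc 1 / δ * infDist (y + δ • a) D ≤ 1 / δ * (infDist (y + δ • b) D + δ * dist a b) := by
        gcongr
    _ = 1 / δ * infDist (y + δ • b) D + dist a b := by field_simp

lemma tendsto_inv_mul_hausdorffDev_of_subset_lowerDerivSet {F : X → Set Y} {x p : X} {y : Y}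
    {G : Set Y} (hG : IsCompact G) (hGsub : G ⊆ lowerDerivSet F x y p) :
    Tendsto (fun δ : ℝ => δ⁻¹ * hausdorffDev ((fun g => y + δ • g) '' G) (F (x + δ • p)))
      (𝓝[>] 0) (𝓝 0) := by
  have hpos : ∀ᶠ δ : ℝ in 𝓝[>] 0, 0 < δ := self_mem_nhdsWithin
  refine tendsto_order.2 ⟨fun a ha => hpos.mono fun δ hδ => ?_, fun ε hε => ?_⟩
  · exact ha.trans_le (mul_nonneg (inv_nonneg.2 hδ.le) (hausdorffDev_nonneg _ _))
  have hunif := hG.eventually_forall_le_of_tendsto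
    (hpos.mono fun δ hδ => one_div_mul_infDist_add_smul_le hδ) hGsub (half_pos hε)
  filter_upwards [hpos, hunif] with δ hδ hδG
  have hdev : hausdorffDev ((fun g => y + δ • g) '' G) (F (x + δ • p)) ≤ δ * (ε / 2) := by
    refine hausdorffDev_le (by positivity) ?_
    rintro _ ⟨g, hg, rfl⟩
    exact (inv_mul_le_iff₀ hδ).1 (by simpa only [one_div] using hδG g hg)
  calc δ⁻¹ * hausdorffDev ((fun g => y + δ • g) '' G) (F (x + δ • p)) ≤ δ⁻¹ * (δ * (ε / 2)) := by
        gcongr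
    _ < ε := by field_simp; linarith

end DerivSet

theorem exists_remainder_of_compact_subset_lowerDerivSet_general
    {X Y : Type*} [NormedAddCommGroup X] [NormedSpace ℝ X]
    [NormedAddCommGroup Y] [NormedSpace ℝ Y]
    (F : X → Set Y) (hne : ∀ x : X, (F x).Nonempty)
    (p : X) (x : X) (y : Y) (hxy : (x, y) ∈ svGraph F)
    (G : Set Y) (hG : IsCompact G) (hGsub : G ⊆ lowerDerivSet F x y p) :
    ∃ δs : ℝ, 0 < δs ∧ ∃ r : ℝ → ℝ,
      (∀ δ ∈ Icc (0 : ℝ) δs, 0 ≤ r δ) ∧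
      Tendsto r (𝓝[>] 0) (𝓝 0) ∧
      ∀ δ ∈ Icc (0 : ℝ) δs,
        (fun g => y + δ • g) '' G ⊆ F (x + δ • p) + (δ * r δ) • closedBall (0 : Y) 1 := by
  set S : ℝ → ℝ := fun δ => hausdorffDev ((fun g => y + δ • g) '' G) (F (x + δ • p))
  have hS : Tendsto (fun δ => δ⁻¹ * S δ) (𝓝[>] 0) (𝓝 0) :=
    tendsto_inv_mul_hausdorffDev_of_subset_lowerDerivSet hG hGsub
  refine ⟨1, one_pos, fun δ => δ⁻¹ * S δ + δ, fun δ hδ => ?_, ?_, fun δ hδ => ?_⟩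
  · exact add_nonneg (mul_nonneg (inv_nonneg.2 hδ.1) (hausdorffDev_nonneg _ _)) hδ.1
  · simpa using hS.add (tendsto_nhdsWithin_of_tendsto_nhds tendsto_id)
  rcases hδ.1.eq_or_lt with rfl | hδ
  · rintro _ ⟨g, -, rfl⟩
    have hy : y ∈ F x := hxy
    simpa using hy
  · refine subset_add_smul_closedBall_of_hausdorffDev_lt ?_ (hne _) ?_
    · exact (hG.image (by fun_prop)).isBounded
    · calc S δ < S δ + δ * δ := lt_add_of_pos_right _ (mul_pos hδ hδ)
        _ = δ * (δ⁻¹ * S δ + δ) := by field_simp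

theorem exists_remainder_of_compact_subset_lowerDerivSet
    {X Y : Type*} [NormedAddCommGroup X] [NormedSpace ℝ X] [CompleteSpace X]
    [NormedAddCommGroup Y] [NormedSpace ℝ Y] [CompleteSpace Y]
    (F : X → Set Y) (hne : ∀ x : X, (F x).Nonempty) (hF : IsClosed (svGraph F))
    (p : X) (x : X) (y : Y) (hxy : (x, y) ∈ svGraph F)
    (G : Set Y) (hG : IsCompact G) (hGsub : G ⊆ lowerDerivSet F x y p) :
    ∃ δs : ℝ, 0 < δs ∧ ∃ r : ℝ → ℝ,
      (∀ δ ∈ Icc (0 : ℝ) δs, 0 ≤ r δ) ∧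
      Tendsto r (𝓝[>] 0) (𝓝 0) ∧
      ∀ δ ∈ Icc (0 : ℝ) δs,
        (fun g => y + δ • g) '' G ⊆ F (x + δ • p) + (δ * r δ) • closedBall (0 : Y) 1 :=
  exists_remainder_of_compact_subset_lowerDerivSet_general F hne p x y hxy G hG hGsub
end

section
/- Let Ω ⊆ ℝ² be the set Ω = {(1/(2n)!, 1/(2n)!) : n ∈ ℕ, n ≥ 1} ∪ {(0,0)}. Then the lower contingent cone of Ω at the origin is trivial: T^L_Ω(0,0) = {(0,0)}. In particular (1,1) ∉ T^L_Ω(0,0). -/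
open Filter Metric Set Topology

/-- The point `(a, b)` of the Euclidean plane. -/
noncomputable def planePt (a b : ℝ) : EuclideanSpace ℝ (Fin 2) :=
  (WithLp.equiv 2 (Fin 2 → ℝ)).symm ![a, b]

/-- The set `Ω = {(1/(2n)!, 1/(2n)!) : n ≥ 1} ∪ {(0,0)}`. -/
noncomputable def exampleSetOmega : Set (EuclideanSpace ℝ (Fin 2)) :=
  {q | ∃ n : ℕ, 1 ≤ n ∧
        q = planePt (1 / (Nat.factorial (2 * n) : ℝ)) (1 / (Nat.factorial (2 * n) : ℝ))} ∪
    {planePt 0 0}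

lemma abs_coord_sub_le_dist (x y : EuclideanSpace ℝ (Fin 2)) (i : Fin 2) :
    |x i - y i| ≤ dist x y := by
  rw [EuclideanSpace.dist_eq, show |x i - y i| = Real.sqrt (dist (x i) (y i) ^ 2) by
    rw [Real.dist_eq, Real.sqrt_sq_eq_abs, abs_abs]]
  exact Real.sqrt_le_sqrt <|
    Finset.single_le_sum (f := fun j => dist (x j) (y j) ^ 2)
      (fun j _ => sq_nonneg _) (Finset.mem_univ i)

lemma my_le_infDist {s : Set (EuclideanSpace ℝ (Fin 2))} (x : EuclideanSpace ℝ (Fin 2))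
    (c : ℝ) (hs : s.Nonempty) (h : ∀ y ∈ s, c ≤ dist x y) : c ≤ infDist x s := by
  rw [Metric.infDist_eq_iInf]
  have : Nonempty s := hs.to_subtype
  exact le_ciInf fun y => h y y.2

lemma planePt_zero : planePt 0 0 = 0 := by
  ext i; fin_cases i <;> simp [planePt]

lemma mem_omega_coords (p : EuclideanSpace ℝ (Fin 2)) (hp : p ∈ exampleSetOmega) :
    ∃ c : ℝ, 0 ≤ c ∧ p 0 = c ∧ p 1 = c ∧
      (c = 0 ∨ ∃ n : ℕ, 1 ≤ n ∧ c = 1 / ((2 * n).factorial : ℝ)) := by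
  rcases hp with ⟨n, hn, rfl⟩ | hp
  · refine ⟨1 / ((2 * n).factorial : ℝ), by positivity, by simp [planePt], by simp [planePt],
      Or.inr ⟨n, hn, rfl⟩⟩
  · rw [Set.mem_singleton_iff] at hp
    exact ⟨0, le_refl _, by simp [hp, planePt], by simp [hp, planePt], Or.inl rfl⟩

lemma one_div_mul_mul (δ X : ℝ) (hδ : δ ≠ 0) : (1 / δ) * (δ * X) = X := by
  field_simp

noncomputable def myDelta (k : ℕ) : ℝ := 1 / ((2 * k + 1).factorial : ℝ)

lemma myDelta_pos (k : ℕ) : 0 < myDelta k := by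
  unfold myDelta
  have : (0:ℝ) < ((2 * k + 1).factorial : ℝ) := by
    exact_mod_cast (2 * k + 1).factorial_pos
  positivity

lemma myDelta_tendsto : Filter.Tendsto myDelta Filter.atTop (nhds 0) := by
  apply squeeze_zero (fun k => (myDelta_pos k).le) (g := fun k : ℕ => 1 / ((k:ℝ) + 1))
  · intro k
    unfold myDelta
    apply one_div_le_one_div_of_le (by positivity)
    have h1 : k + 1 ≤ 2 * k + 1 := by omega
    have h2 : 2 * k + 1 ≤ (2 * k + 1).factorial := Nat.self_le_factorial _
    exact_mod_cast le_trans h1 h2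
  · exact tendsto_one_div_add_atTop_nhds_zero_nat

/-- The key numeric estimate: for `k` large (depending on `a > 0`), the point `a * myDelta k`
is far (relative to `myDelta k`) from every `1/(2n)!`. -/
lemma key_bound (a : ℝ) (ha : 0 < a) (k n : ℕ) (hn : 1 ≤ n)
    (hk1 : a ≤ (k:ℝ)) (hka : 1 ≤ (k:ℝ) * a) :
    myDelta k * (a / 2) ≤ |myDelta k * a - 1 / ((2 * n).factorial : ℝ)| := by
  set P : ℝ := ((2 * k + 1).factorial : ℝ) with hPdef
  have hP : (0:ℝ) < P := by rw [hPdef]; exact_mod_cast (2 * k + 1).factorial_pos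
  set N : ℝ := ((2 * n).factorial : ℝ) with hNdef
  have hN : (0:ℝ) < N := by rw [hNdef]; exact_mod_cast (2 * n).factorial_pos
  have hδ : myDelta k = 1 / P := rfl
  rcases le_or_gt n k with hnk | hnk
  · -- c = 1/N ≥ (2k+1)/P ≥ 2a/P
    have hfac : N * (2 * (k:ℝ) + 1) ≤ P := by
      have h3 : (2 * n).factorial ≤ (2 * k).factorial := Nat.factorial_le (by omega)
      have h4 : (2 * k + 1).factorial = (2 * k + 1) * (2 * k).factorial := Nat.factorial_succ _
      have h5 : (2 * n).factorial * (2 * k + 1) ≤ (2 * k + 1).factorial := by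
        rw [h4]; nlinarith
      rw [hNdef, hPdef]
      exact_mod_cast h5
    have hc1 : (2 * (k:ℝ) + 1) * (1 / P) ≤ 1 / N := by
      rw [mul_one_div, div_le_div_iff₀ hP hN, one_mul]
      nlinarith
    have h2a : 2 * a * (1 / P) ≤ 1 / N := by
      have hPinv : (0:ℝ) ≤ 1 / P := by positivity
      nlinarith
    rw [hδ, abs_sub_comm, abs_of_nonneg (by nlinarith [mul_pos ha (one_div_pos.mpr hP)])]
    nlinarith [mul_pos ha (one_div_pos.mpr hP)]
  · -- c = 1/N ≤ 1/(P * (2k+2)) ≤ (a/2) * (1/P)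
    have hfac : P * (2 * (k:ℝ) + 2) ≤ N := by
      have h3 : (2 * k + 2).factorial ≤ (2 * n).factorial := Nat.factorial_le (by omega)
      have h4 : (2 * k + 2).factorial = (2 * k + 2) * (2 * k + 1).factorial := Nat.factorial_succ _
      have h5 : (2 * k + 1).factorial * (2 * k + 2) ≤ (2 * n).factorial := by
        rw [h4] at h3; nlinarith
      rw [hNdef, hPdef]
      exact_mod_cast h5
    have hc1 : 1 / N ≤ 1 / (P * (2 * (k:ℝ) + 2)) :=
      one_div_le_one_div_of_le (by positivity) hfac
    have h5 : 1 / (2 * (k:ℝ) + 2) ≤ a / 2 := by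
      rw [div_le_div_iff₀ (by positivity) two_pos]
      nlinarith
    have hc2 : 1 / (P * (2 * (k:ℝ) + 2)) ≤ (1 / P) * (a / 2) := by
      rw [show (1:ℝ) / (P * (2 * (k:ℝ) + 2)) = 1 / P * (1 / (2 * (k:ℝ) + 2)) from
        (one_div_mul_one_div P (2 * (k:ℝ) + 2)).symm]
      exact mul_le_mul_of_nonneg_left h5 (by positivity)
    have hc3 : 1 / N ≤ (1 / P) * (a / 2) := le_trans hc1 hc2
    rw [hδ, abs_of_nonneg (by nlinarith [one_div_pos.mpr hP])]
    nlinarith [one_div_pos.mpr hP]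

set_option maxHeartbeats 1000000 in
theorem lowerContingentCone_exampleSetOmega :
    lowerContingentCone exampleSetOmega (planePt 0 0) = {planePt 0 0} ∧
    planePt 1 1 ∉ lowerContingentCone exampleSetOmega (planePt 0 0) := by
  have hmem0 : planePt 0 0 ∈ exampleSetOmega := Or.inr rfl
  have hne : exampleSetOmega.Nonempty := ⟨_, hmem0⟩
  have key : ∀ u ∈ lowerContingentCone exampleSetOmega (planePt 0 0), u = planePt 0 0 := by
    intro u hu
    simp only [lowerContingentCone, Set.mem_setOf_eq, planePt_zero, zero_add] at hu
    set f : ℝ → ℝ := fun δ => (1 / δ) * infDist (δ • u) exampleSetOmega with hf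
    -- Step 1 : u 0 = u 1
    have hab : u 0 = u 1 := by
      by_contra hne'
      have hc : (0:ℝ) < |u 0 - u 1| / 2 := by
        have : u 0 - u 1 ≠ 0 := sub_ne_zero.mpr hne'
        positivity
      have hev : ∀ᶠ δ in 𝓝[>] (0:ℝ), |u 0 - u 1| / 2 ≤ f δ := by
        filter_upwards [self_mem_nhdsWithin] with δ hδ
        have hδ0 : (0:ℝ) < δ := hδ
        have hinf : δ * (|u 0 - u 1| / 2) ≤ infDist (δ • u) exampleSetOmega := by
          apply my_le_infDist _ _ hne
          intro p hp
          obtain ⟨c, hc0, hp0, hp1, -⟩ := mem_omega_coords p hp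
          have h0 := abs_coord_sub_le_dist (δ • u) p 0
          have h1 := abs_coord_sub_le_dist (δ • u) p 1
          have e0 : (δ • u) 0 = δ * u 0 := rfl
          have e1 : (δ • u) 1 = δ * u 1 := rfl
          rw [e0, hp0] at h0
          rw [e1, hp1] at h1
          have htri : δ * |u 0 - u 1| ≤ |δ * u 0 - c| + |δ * u 1 - c| := by
            have h2 : |δ * u 0 - δ * u 1| ≤ |δ * u 0 - c| + |c - δ * u 1| :=
              abs_sub_le _ _ _
            rw [abs_sub_comm c (δ * u 1)] at h2
            calc δ * |u 0 - u 1| = |δ * (u 0 - u 1)| := by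
                  rw [abs_mul, abs_of_pos hδ0]
              _ = |δ * u 0 - δ * u 1| := by ring_nf
              _ ≤ _ := h2
          linarith
        have h3 : (1 / δ) * (δ * (|u 0 - u 1| / 2)) ≤ f δ :=
          mul_le_mul_of_nonneg_left hinf (by positivity)
        rw [one_div_mul_mul _ _ hδ0.ne'] at h3
        exact h3
      have := ge_of_tendsto hu hev
      linarith
    -- Step 2 : u 0 is not negative
    have hge : 0 ≤ u 0 := by
      by_contra hlt
      push_neg at hlt
      have hev : ∀ᶠ δ in 𝓝[>] (0:ℝ), -u 0 ≤ f δ := by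
        filter_upwards [self_mem_nhdsWithin] with δ hδ
        have hδ0 : (0:ℝ) < δ := hδ
        have hinf : δ * (-u 0) ≤ infDist (δ • u) exampleSetOmega := by
          apply my_le_infDist _ _ hne
          intro p hp
          obtain ⟨c, hc0, hp0, -, -⟩ := mem_omega_coords p hp
          have h0 := abs_coord_sub_le_dist (δ • u) p 0
          have e0 : (δ • u) 0 = δ * u 0 := rfl
          rw [e0, hp0] at h0
          have : δ * (-u 0) ≤ |δ * u 0 - c| := by
            rw [abs_sub_comm, abs_of_nonneg (by nlinarith)]
            nlinarith
          linarith
        have h3 : (1 / δ) * (δ * (-u 0)) ≤ f δ :=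
          mul_le_mul_of_nonneg_left hinf (by positivity)
        rw [one_div_mul_mul _ _ hδ0.ne'] at h3
        exact h3
      have := ge_of_tendsto hu hev
      linarith
    -- Step 3 : u 0 is not positive
    have hle : u 0 ≤ 0 := by
      by_contra hlt
      push_neg at hlt
      have htend : Filter.Tendsto myDelta Filter.atTop (𝓝[>] (0:ℝ)) :=
        tendsto_nhdsWithin_of_tendsto_nhds_of_eventually_within _ myDelta_tendsto
          (Filter.Eventually.of_forall fun k => myDelta_pos k)
      have hcomp : Filter.Tendsto (fun k => f (myDelta k)) atTop (𝓝 0) := hu.comp htend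
      have hev : ∀ᶠ k : ℕ in atTop, u 0 / 2 ≤ f (myDelta k) := by
        have h1 : ∀ᶠ k : ℕ in atTop, u 0 ≤ (k:ℝ) :=
          tendsto_natCast_atTop_atTop.eventually_ge_atTop (u 0)
        have h2 : ∀ᶠ k : ℕ in atTop, 1 / u 0 ≤ (k:ℝ) :=
          tendsto_natCast_atTop_atTop.eventually_ge_atTop (1 / u 0)
        filter_upwards [h1, h2] with k hk1 hk2
        have hδ0 : (0:ℝ) < myDelta k := myDelta_pos k
        have hka : 1 ≤ (k:ℝ) * u 0 := by
          rw [div_le_iff₀ hlt] at hk2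
          linarith
        have hinf : myDelta k * (u 0 / 2) ≤ infDist (myDelta k • u) exampleSetOmega := by
          apply my_le_infDist _ _ hne
          intro p hp
          obtain ⟨c, hc0, hp0, -, hcform⟩ := mem_omega_coords p hp
          have h0 := abs_coord_sub_le_dist (myDelta k • u) p 0
          have e0 : (myDelta k • u) 0 = myDelta k * u 0 := rfl
          rw [e0, hp0] at h0
          refine le_trans ?_ h0
          rcases hcform with rfl | ⟨n, hn, rfl⟩
          · rw [sub_zero, abs_of_pos (by positivity)]
            nlinarith
          · exact key_bound (u 0) hlt k n hn hk1 hka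
        have h3 : (1 / myDelta k) * (myDelta k * (u 0 / 2)) ≤ f (myDelta k) :=
          mul_le_mul_of_nonneg_left hinf (by positivity)
        rw [one_div_mul_mul _ _ hδ0.ne'] at h3
        exact h3
      have := ge_of_tendsto hcomp hev
      linarith
    have hu0 : u 0 = 0 := le_antisymm hle hge
    have hu1 : u 1 = 0 := by rw [← hab]; exact hu0
    rw [planePt_zero]
    ext i; fin_cases i
    · exact hu0
    · exact hu1
  have hfwd : planePt 0 0 ∈ lowerContingentCone exampleSetOmega (planePt 0 0) := by
    simp only [lowerContingentCone, Set.mem_setOf_eq, planePt_zero, smul_zero, add_zero]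
    have h4 : infDist (0 : EuclideanSpace ℝ (Fin 2)) exampleSetOmega = 0 := by
      rw [← planePt_zero]; exact infDist_zero_of_mem hmem0
    simp only [h4, mul_zero]
    exact tendsto_const_nhds
  have heq : lowerContingentCone exampleSetOmega (planePt 0 0) = {planePt 0 0} :=
    Set.eq_singleton_iff_unique_mem.mpr ⟨hfwd, key⟩
  refine ⟨heq, ?_⟩
  intro h
  have h5 := key _ h
  have h0 : planePt 1 1 0 = planePt 0 0 0 := by rw [h5]
  simp [planePt] at h0
end

section
/- Let F : ℝ ⇝ ℝ be the set-valued map defined by F(x) = {x·sin(1/x)} for x ≠ 0 and F(0) = {0}. Then the upper derivative set of F at (0,0) in the direction 1 is the full interval: ∂^U F(0,0)/∂1 = [-1, 1]; that is, u ∈ ℝ satisfies liminf_{δ→0+} (1/δ) d(δu, F(δ)) = 0 if and only if −1 ≤ u ≤ 1. -/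
open Filter Metric Set Topology

open Classical in
/-- The set-valued map `F(x) = {x · sin(1/x)}` for `x ≠ 0`, `F(0) = {0}`. -/
noncomputable def Fsin : ℝ → Set ℝ := fun x =>
  if x = 0 then {0} else {x * Real.sin (1 / x)}

/-! Along the direction `p = 1` the scaled distance `(1/δ) d(δu, F(δ))` equals `|u - sin(1/δ)|`.
For `|u| > 1` this stays above `|u| - 1 > 0`; for `u ∈ [-1, 1]` it vanishes at the points
`δ = 1 / (arcsin u + 2πn)`, which accumulate at `0⁺`. -/

open Real

lemma scaled_infDist_Fsin_eq (u : ℝ) :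
    ∀ᶠ δ in 𝓝[>] (0 : ℝ),
      (1 / δ) * infDist ((0 : ℝ) + δ • u) (Fsin (0 + δ • 1)) = |u - sin (1 / δ)| := by
  filter_upwards [self_mem_nhdsWithin] with δ (hδ : 0 < δ)
  simp only [zero_add, smul_eq_mul, mul_one, Fsin, if_neg hδ.ne', infDist_singleton,
    Real.dist_eq, ← mul_sub, abs_mul, abs_of_pos hδ]
  field_simp

lemma abs_sub_one_le_abs_sub_sin (u x : ℝ) : |u| - 1 ≤ |u - sin x| := by
  linarith [abs_sub_abs_le_abs_sub u (sin x), abs_sin_le_one x]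

lemma isBoundedUnder_le_abs_sub_sin {α : Type*} (l : Filter α) (u : ℝ) (g : α → ℝ) :
    IsBoundedUnder (· ≤ ·) l (fun a => |u - sin (g a)|) :=
  isBoundedUnder_of ⟨|u| + 1, fun a => by
    linarith [abs_sub u (sin (g a)), abs_sin_le_one (g a)]⟩

lemma frequently_sin_eq_atTop {u : ℝ} (hu : u ∈ Icc (-1 : ℝ) 1) :
    ∃ᶠ x in atTop, sin x = u := by
  rw [frequently_atTop]
  intro a
  obtain ⟨n, hn⟩ := exists_nat_ge ((a - arcsin u) / (2 * π))
  refine ⟨arcsin u + n * (2 * π), ?_, by rw [sin_add_nat_mul_two_pi, sin_arcsin hu.1 hu.2]⟩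
  rw [div_le_iff₀ (by positivity)] at hn
  linarith

lemma frequently_sin_inv_eq_nhdsGT {u : ℝ} (hu : u ∈ Icc (-1 : ℝ) 1) :
    ∃ᶠ δ in 𝓝[>] (0 : ℝ), sin (1 / δ) = u :=
  tendsto_inv_atTop_nhdsGT_zero.frequently <| by
    simpa only [one_div, inv_inv] using frequently_sin_eq_atTop hu

lemma liminf_abs_sub_sin_inv_eq_zero_iff (u : ℝ) :
    liminf (fun δ => |u - sin (1 / δ)|) (𝓝[>] (0 : ℝ)) = 0 ↔ u ∈ Icc (-1 : ℝ) 1 := by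
  have hcobdd := (isBoundedUnder_le_abs_sub_sin (𝓝[>] (0 : ℝ)) u (1 / ·)).isCoboundedUnder_ge
  constructor
  · intro h
    have hlower : |u| - 1 ≤ liminf (fun δ => |u - sin (1 / δ)|) (𝓝[>] (0 : ℝ)) :=
      le_liminf_of_le hcobdd (Eventually.of_forall fun δ => abs_sub_one_le_abs_sub_sin u _)
    exact abs_le.mp (by linarith)
  · intro hu
    refine le_antisymm ?_ (le_liminf_of_le hcobdd (Eventually.of_forall fun δ => abs_nonneg _))
    refine liminf_le_of_frequently_le ?_ (isBoundedUnder_of ⟨0, fun δ => abs_nonneg _⟩)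
    exact (frequently_sin_inv_eq_nhdsGT hu).mono fun δ hδ => by rw [hδ, sub_self, abs_zero]

theorem upperDerivSet_Fsin_eq_Icc :
    upperDerivSet Fsin 0 0 1 = Icc (-1 : ℝ) 1 := by
  ext u
  rw [upperDerivSet, mem_ofPred_eq, liminf_congr (scaled_infDist_Fsin_eq u)]
  exact liminf_abs_sub_sin_inv_eq_zero_iff u
end

section
/- Let F : ℝ ⇝ ℝ be the set-valued map defined by F(x) = {x·sin(1/x)} for x ≠ 0 and F(0) = {0}, and let G = [-1, 1]. Then, although G ⊆ ∂^U F(0,0)/∂1, the conclusion of the deviation theorem fails for the upper derivative set: liminf_{δ→0+} (1/δ) h*(δG, F(δ)) ≥ 1/2, so (1/δ) h*(0 + δG, F(0 + δ·1)) does not tend to 0 as δ → 0+. -/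
open Filter Metric Set Topology

lemma fsin_infDist_eq (u δ : ℝ) (hδ : 0 < δ) :
    (1/δ) * infDist ((0:ℝ) + δ • u) (Fsin (0 + δ • 1)) = |u - Real.sin (1/δ)| := by
  have hne : δ ≠ 0 := hδ.ne'
  simp only [zero_add, smul_eq_mul, mul_one, Fsin, if_neg hne, Metric.infDist_singleton,
    Real.dist_eq]
  rw [← mul_sub, abs_mul, abs_of_pos hδ]
  field_simp

lemma fsin_aux_bounds (δ : ℝ) (hδ : 0 < δ) :
    1 ≤ (1 / δ) * hausdorffDev ((fun g => (0 : ℝ) + δ • g) '' Icc (-1 : ℝ) 1) (Fsin (0 + δ • 1))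
    ∧ (1 / δ) * hausdorffDev ((fun g => (0 : ℝ) + δ • g) '' Icc (-1 : ℝ) 1) (Fsin (0 + δ • 1)) ≤ 2 := by
  have hne : δ ≠ 0 := hδ.ne'
  set y := δ * Real.sin (1 / δ) with hy
  have hyabs : |y| ≤ δ := by
    rw [hy, abs_mul, abs_of_pos hδ]
    exact mul_le_of_le_one_right hδ.le (abs_le.2 ⟨Real.neg_one_le_sin _, Real.sin_le_one _⟩)
  set S := ((fun e => infDist e (Fsin (0 + δ • 1))) '' ((fun g => (0 : ℝ) + δ • g) '' Icc (-1 : ℝ) 1))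
  have hmem : ∀ s ∈ S, ∃ g ∈ Icc (-1:ℝ) 1, s = |δ * g - y| := by
    rintro s ⟨e, ⟨g, hg, rfl⟩, rfl⟩
    exact ⟨g, hg, by simp [Fsin, hne, Real.dist_eq, hy]⟩
  have hbdd : ∀ s ∈ S, s ≤ 2 * δ := by
    intro s hs
    obtain ⟨g, hg, rfl⟩ := hmem s hs
    have : |δ * g| ≤ δ := by
      rw [abs_mul, abs_of_pos hδ]
      nlinarith [abs_le.2 ⟨hg.1, hg.2⟩, abs_nonneg g]
    calc |δ * g - y| ≤ |δ * g| + |y| := abs_sub _ _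
      _ ≤ 2 * δ := by linarith
  have hS1 : |δ * 1 - y| ∈ S := by
    refine ⟨(0:ℝ) + δ • 1, ⟨1, by norm_num, rfl⟩, by simp [Fsin, hne, Real.dist_eq, hy]⟩
  have hS2 : |δ * (-1) - y| ∈ S := by
    refine ⟨(0:ℝ) + δ • (-1), ⟨-1, by norm_num, rfl⟩, by simp [Fsin, hne, Real.dist_eq, hy]⟩
  have hBdd : BddAbove S := ⟨2 * δ, fun s hs => hbdd s hs⟩
  have hlo : δ ≤ sSup S := by
    rcases le_or_gt δ |δ * 1 - y| with h | h
    · exact h.trans (le_csSup hBdd hS1)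
    · have : δ ≤ |δ * (-1) - y| := by
        cases abs_cases (δ * 1 - y) with
        | inl h1 => cases abs_cases (δ * (-1) - y) with
          | inl h2 => linarith
          | inr h2 => linarith
        | inr h1 => cases abs_cases (δ * (-1) - y) with
          | inl h2 => linarith
          | inr h2 => linarith
      exact this.trans (le_csSup hBdd hS2)
  have hhi : sSup S ≤ 2 * δ := csSup_le ⟨_, hS1⟩ hbdd
  constructor
  · rw [hausdorffDev]
    have h := mul_le_mul_of_nonneg_left hlo (by positivity : (0:ℝ) ≤ 1/δ)
    rwa [one_div_mul_cancel hne] at h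
  · rw [hausdorffDev]
    have h := mul_le_mul_of_nonneg_left hhi (by positivity : (0:ℝ) ≤ 1/δ)
    have h2 : 1/δ*(2*δ) = 2 := by field_simp
    linarith

set_option maxHeartbeats 1000000 in
theorem hausdorffDev_fails_for_upperDerivSet_Fsin :
    Icc (-1 : ℝ) 1 ⊆ upperDerivSet Fsin 0 0 1 ∧
    (1 / 2 : ℝ) ≤ liminf
        (fun δ : ℝ => (1 / δ) *
          hausdorffDev ((fun g => (0 : ℝ) + δ • g) '' Icc (-1 : ℝ) 1) (Fsin (0 + δ • 1)))
        (𝓝[>] 0) ∧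
    ¬ Tendsto
        (fun δ : ℝ => (1 / δ) *
          hausdorffDev ((fun g => (0 : ℝ) + δ • g) '' Icc (-1 : ℝ) 1) (Fsin (0 + δ • 1)))
        (𝓝[>] 0) (𝓝 0) := by
  set f : ℝ → ℝ := fun δ => (1 / δ) *
      hausdorffDev ((fun g => (0 : ℝ) + δ • g) '' Icc (-1 : ℝ) 1) (Fsin (0 + δ • 1)) with hf
  have hev1 : ∀ᶠ δ in 𝓝[>] (0:ℝ), 1 ≤ f δ := by
    filter_upwards [self_mem_nhdsWithin] with δ hδ
    exact (fsin_aux_bounds δ hδ).1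
  have hev2 : ∀ᶠ δ in 𝓝[>] (0:ℝ), f δ ≤ 2 := by
    filter_upwards [self_mem_nhdsWithin] with δ hδ
    exact (fsin_aux_bounds δ hδ).2
  have hcob : IsCoboundedUnder (· ≥ ·) (𝓝[>] (0:ℝ)) f :=
    isCoboundedUnder_ge_of_eventually_le _ hev2
  refine ⟨?_, ?_, ?_⟩
  · -- Icc ⊆ upperDerivSet
    intro u hu
    have hcongr : ∀ᶠ δ in 𝓝[>] (0:ℝ),
        (1 / δ) * infDist ((0:ℝ) + δ • u) (Fsin (0 + δ • 1)) = |u - Real.sin (1/δ)| := by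
      filter_upwards [self_mem_nhdsWithin] with δ hδ
      exact fsin_infDist_eq u δ hδ
    show liminf _ _ = 0
    rw [liminf_congr hcongr]
    set a := Real.arcsin u with ha
    have hsa : Real.sin a = u := Real.sin_arcsin hu.1 hu.2
    have htpos : ∀ n : ℕ, 0 < a + ((n:ℝ)+1) * (2 * Real.pi) := by
      intro n
      have h1 : -(Real.pi/2) ≤ a := Real.neg_pi_div_two_le_arcsin u
      have h0 : (0:ℝ) ≤ (n:ℝ) := Nat.cast_nonneg n
      nlinarith [Real.pi_pos]
    have htop : Tendsto (fun n : ℕ => a + ((n:ℝ)+1) * (2 * Real.pi)) atTop atTop := by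
      have hb : Tendsto (fun n : ℕ => (2*Real.pi) * (n:ℝ) + (a + 2*Real.pi)) atTop atTop :=
        tendsto_atTop_add_const_right _ _
          (tendsto_natCast_atTop_atTop.const_mul_atTop Real.two_pi_pos)
      exact hb.congr fun n => by ring
    have hx : Tendsto (fun n : ℕ => (a + ((n:ℝ)+1) * (2 * Real.pi))⁻¹) atTop (𝓝[>] (0:ℝ)) := by
      apply tendsto_nhdsWithin_of_tendsto_nhds_of_eventually_within
      · exact htop.inv_tendsto_atTop
      · exact Eventually.of_forall fun n => inv_pos.2 (htpos n)
    have hval : ∀ n : ℕ, |u - Real.sin (1/((a + ((n:ℝ)+1) * (2 * Real.pi))⁻¹))| = 0 := by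
      intro n
      rw [one_div, inv_inv]
      have : a + ((n:ℝ)+1) * (2 * Real.pi) = a + ((n+1 : ℕ):ℝ) * (2 * Real.pi) := by
        push_cast; ring
      rw [this, Real.sin_add_nat_mul_two_pi, hsa, sub_self, abs_zero]
    have hfreq : ∃ᶠ δ in 𝓝[>] (0:ℝ), |u - Real.sin (1/δ)| ≤ 0 :=
      hx.frequently (Frequently.of_forall fun n => le_of_eq (hval n))
    refine le_antisymm ?_ ?_
    · exact liminf_le_of_frequently_le hfreq
        (isBoundedUnder_of ⟨0, fun x => abs_nonneg _⟩)
    · refine le_liminf_of_le (isCoboundedUnder_ge_of_le _ (x := 2) ?_)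
        (Eventually.of_forall fun x => abs_nonneg _)
      intro x
      calc |u - Real.sin (1/x)| ≤ |u| + |Real.sin (1/x)| := abs_sub _ _
        _ ≤ 2 := by
          have h1 : |u| ≤ 1 := abs_le.2 ⟨hu.1, hu.2⟩
          have h2 : |Real.sin (1/x)| ≤ 1 :=
            abs_le.2 ⟨Real.neg_one_le_sin _, Real.sin_le_one _⟩
          linarith
  · exact le_liminf_of_le hcob (hev1.mono fun δ h => by linarith)
  · intro h
    have hlt : ∀ᶠ δ in 𝓝[>] (0:ℝ), f δ < 1 := h.eventually_lt_const (by norm_num)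
    obtain ⟨δ, h1, h2⟩ := (hev1.and hlt).exists
    linarith
end
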